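/- For the family of binary distributions with P(A=1,B=1,C=0,D=0) = 1/2-ε, P(A=0,B=1,C=1,D=0) = ε, P(A=1,B=0,C=1,D=0) = ε, P(A=0,B=0,C=1,D=1) = 1/2-ε, as ε → 0 one has I(C:D) - I(A:B) = 2ε + O(ε²) and I(A:B|C) = O(ε²). In particular, for every κ > 0 there exists ε₀ > 0 such that for all 0 < ε < ε₀, I(C:D) > I(A:B) + κ·I(A:B|C). -/

import Mathlib

open scoped BigOperators Classical

noncomputable section

/-- `p` is a probability mass function on the finite type `Ω`. -/
def IsPMF {Ω : Type*} [Fintype Ω] (p : Ω → ℝ) : Prop :=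
  (∀ ω, 0 ≤ p ω) ∧ ∑ ω, p ω = 1

/-- Probability of the event `X = s` under `p`. -/
def prOf {Ω S : Type*} [Fintype Ω] [DecidableEq S] (p : Ω → ℝ) (X : Ω → S) (s : S) : ℝ :=
  ∑ ω ∈ Finset.univ.filter (fun ω => X ω = s), p ω

/-- Shannon entropy (in bits) of the random variable `X` under the pmf `p`. -/
def ent {Ω S : Type*} [Fintype Ω] [Fintype S] [DecidableEq S] (p : Ω → ℝ) (X : Ω → S) : ℝ :=
  - ∑ s : S, prOf p X s * Real.logb 2 (prOf p X s)

/-- Mutual information `I(X:Y) = H(X) + H(Y) - H(X,Y)`. -/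
def mi {Ω S T : Type*} [Fintype Ω] [Fintype S] [Fintype T] [DecidableEq S] [DecidableEq T]
    (p : Ω → ℝ) (X : Ω → S) (Y : Ω → T) : ℝ :=
  ent p X + ent p Y - ent p (fun ω => (X ω, Y ω))

/-- Conditional mutual information `I(X:Y|Z) = H(X,Z) + H(Y,Z) - H(X,Y,Z) - H(Z)`. -/
def cmi {Ω S T U : Type*} [Fintype Ω] [Fintype S] [Fintype T] [Fintype U]
    [DecidableEq S] [DecidableEq T] [DecidableEq U]
    (p : Ω → ℝ) (X : Ω → S) (Y : Ω → T) (Z : Ω → U) : ℝ :=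
  ent p (fun ω => (X ω, Z ω)) + ent p (fun ω => (Y ω, Z ω))
    - ent p (fun ω => (X ω, Y ω, Z ω)) - ent p Z

/-- Conditional entropy `H(X|Y) = H(X,Y) - H(Y)`. -/
def condEnt {Ω S T : Type*} [Fintype Ω] [Fintype S] [Fintype T] [DecidableEq S] [DecidableEq T]
    (p : Ω → ℝ) (X : Ω → S) (Y : Ω → T) : ℝ :=
  ent p (fun ω => (X ω, Y ω)) - ent p Y

/-- The four coordinate random variables on `Bool × Bool × Bool × Bool`. -/
def vA : Bool × Bool × Bool × Bool → Bool := fun ω => ω.1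
def vB : Bool × Bool × Bool × Bool → Bool := fun ω => ω.2.1
def vC : Bool × Bool × Bool × Bool → Bool := fun ω => ω.2.2.1
def vD : Bool × Bool × Bool × Bool → Bool := fun ω => ω.2.2.2

/-- The witness distribution of Theorem 3(b). -/
def p12 (ε : ℝ) : Bool × Bool × Bool × Bool → ℝ := fun ω =>
  if ω = (true, true, false, false) then 1 / 2 - ε
  else if ω = (false, true, true, false) then ε
  else if ω = (true, false, true, false) then ε
  else if ω = (false, false, true, true) then 1 / 2 - ε
  else 0

/-!
Reading off the marginals of `p12 ε`, both `I(A:B|C)` and `I(C:D) - I(A:B) - 2ε` are multiples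
(by `1` and `-2`) of the deficit `1 - h(1/2 + ε)` of the binary entropy below its maximum. The
elementary bounds `t - 1 ≤ t log t ≤ t (t - 1)` at `t = 1 ± 2ε` place this deficit between `0`
and `4ε² / log 2 ≤ 6ε²`.
-/

open Real

lemma Real.mul_log_le_mul_sub_one {t : ℝ} (ht : 0 ≤ t) : t * log t ≤ t * (t - 1) := by
  rcases ht.eq_or_lt with rfl | ht
  · simp
  · exact mul_le_mul_of_nonneg_left (log_le_sub_one_of_pos ht) ht.le

-- `1 - h(1/2 + ε)` for the binary entropy `h` in bits
def binEntropyDeficit (ε : ℝ) : ℝ :=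
  1 + (1 / 2 + ε) * logb 2 (1 / 2 + ε) + (1 / 2 - ε) * logb 2 (1 / 2 - ε)

lemma binEntropyDeficit_eq {ε : ℝ} (hε : |ε| < 1 / 2) :
    binEntropyDeficit ε =
      ((1 + 2 * ε) * log (1 + 2 * ε) + (1 - 2 * ε) * log (1 - 2 * ε)) / (2 * log 2) := by
  obtain ⟨hlo, hhi⟩ := abs_lt.mp hε
  have logb_half_mul (t : ℝ) (ht : 0 < t) : logb 2 (t / 2) = (log t - log 2) / log 2 := by
    rw [logb, log_div ht.ne' two_ne_zero]
  rw [binEntropyDeficit, show 1 / 2 + ε = (1 + 2 * ε) / 2 by ring,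
    show 1 / 2 - ε = (1 - 2 * ε) / 2 by ring, logb_half_mul _ (by linarith),
    logb_half_mul _ (by linarith)]
  field_simp
  ring

lemma binEntropyDeficit_nonneg {ε : ℝ} (hε : |ε| < 1 / 2) : 0 ≤ binEntropyDeficit ε := by
  obtain ⟨hlo, hhi⟩ := abs_lt.mp hε
  have h₁ := self_sub_one_le_mul_log (x := 1 + 2 * ε) (by linarith)
  have h₂ := self_sub_one_le_mul_log (x := 1 - 2 * ε) (by linarith)
  rw [binEntropyDeficit_eq hε]
  exact div_nonneg (by linarith) (by positivity)

lemma binEntropyDeficit_le {ε : ℝ} (hε : |ε| < 1 / 2) : binEntropyDeficit ε ≤ 6 * ε ^ 2 := by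
  obtain ⟨hlo, hhi⟩ := abs_lt.mp hε
  have h₁ := mul_log_le_mul_sub_one (t := 1 + 2 * ε) (by linarith)
  have h₂ := mul_log_le_mul_sub_one (t := 1 - 2 * ε) (by linarith)
  have hlog2 : 2 / 3 < log 2 := by linarith [log_two_gt_d9]
  rw [binEntropyDeficit_eq hε, div_le_iff₀ (by positivity)]
  nlinarith [sq_nonneg ε]

lemma logb_two_half : logb 2 (1 / 2) = -1 := by
  rw [one_div, logb_inv, logb_self_eq_one one_lt_two]

lemma cmi_p12 (ε : ℝ) : cmi (p12 ε) vA vB vC = binEntropyDeficit ε := by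
  simp only [cmi, ent, prOf, p12, binEntropyDeficit, Finset.sum_filter, Fintype.sum_prod_type,
    Fintype.sum_bool]
  simp only [vA, vB, vC]
  norm_num
  rw [logb_two_half, add_comm ε (1 / 2)]
  ring

lemma mi_sub_mi_p12 {ε : ℝ} (hε : ε ≠ 0) :
    mi (p12 ε) vC vD - mi (p12 ε) vA vB = 2 * ε - 2 * binEntropyDeficit ε := by
  simp only [mi, ent, prOf, p12, binEntropyDeficit, Finset.sum_filter, Fintype.sum_prod_type,
    Fintype.sum_bool]
  simp only [vA, vB, vC, vD]
  norm_num
  rw [← two_mul, logb_mul two_ne_zero hε, logb_self_eq_one one_lt_two, logb_two_half,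
    add_comm ε (1 / 2)]
  ring

lemma p12_bounds {ε : ℝ} (h₀ : 0 < ε) (h₁ : ε < 1 / 2) :
    |mi (p12 ε) vC vD - mi (p12 ε) vA vB - 2 * ε| ≤ 12 * ε ^ 2 ∧
      cmi (p12 ε) vA vB vC ≤ 12 * ε ^ 2 := by
  have hε : |ε| < 1 / 2 := abs_lt.mpr ⟨by linarith, h₁⟩
  have hg₀ := binEntropyDeficit_nonneg hε
  have hg₁ := binEntropyDeficit_le hε
  rw [mi_sub_mi_p12 h₀.ne', cmi_p12, sub_sub_cancel_left, abs_neg, abs_of_nonneg (by positivity)]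
  constructor <;> linarith

theorem p12_asymptotics :
    (∃ K ε₀ : ℝ, 0 < K ∧ 0 < ε₀ ∧
      ∀ ε : ℝ, 0 < ε → ε < ε₀ →
        |mi (p12 ε) vC vD - mi (p12 ε) vA vB - 2 * ε| ≤ K * ε ^ 2 ∧
          cmi (p12 ε) vA vB vC ≤ K * ε ^ 2) ∧
    (∀ κ : ℝ, 0 < κ → ∃ ε₀ : ℝ, 0 < ε₀ ∧
      ∀ ε : ℝ, 0 < ε → ε < ε₀ →
        mi (p12 ε) vA vB + κ * cmi (p12 ε) vA vB vC < mi (p12 ε) vC vD) := by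
  refine ⟨⟨12, 1 / 2, by norm_num, by norm_num, fun ε h₀ h₁ => p12_bounds h₀ h₁⟩, fun κ hκ => ?_⟩
  refine ⟨min (1 / 2) (1 / (6 * (1 + κ))), by positivity, fun ε h₀ h₁ => ?_⟩
  obtain ⟨hdiff, hcmi⟩ := p12_bounds h₀ (h₁.trans_le (min_le_left _ _))
  have hsmall : 6 * (1 + κ) * ε < 1 := by
    have := h₁.trans_le (min_le_right _ _)
    rwa [lt_div_iff₀ (by positivity), mul_comm] at this
  have hκcmi : κ * cmi (p12 ε) vA vB vC ≤ κ * (12 * ε ^ 2) := by gcongr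
  nlinarith [(abs_le.mp hdiff).1]

end
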